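/- For every integer k ≥ 3 and every choice function x assigning to each nonempty subset S ⊆ A a vertex x_S ∈ {b_S, c_S}, the set R = {x_S : ∅ ≠ S ⊆ A} is a resolving set of the graph G_k. (Equivalently, the collection of pairs {{b_S, c_S} : ∅ ≠ S ⊆ A} is a pairing resolving set of G_k.) -/
import Mathlib

open SimpleGraph

/-- `W` is a resolving set of `G`: every pair of distinct vertices is
distinguished by its distance to some vertex of `W`. -/
def IsResolving {V : Type*} (G : SimpleGraph V) (W : Set V) : Prop :=
  ∀ x y : V, x ≠ y → ∃ z ∈ W, G.dist x z ≠ G.dist y z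

/-- The metric dimension of `G`: the minimum cardinality of a resolving set. -/
noncomputable def metricDim {V : Type*} (G : SimpleGraph V) : ℕ :=
  sInf {n | ∃ W : Set V, W.ncard = n ∧ IsResolving G W}

/-- The vertex set of `G_k`: the set `A` (a copy of `Fin k`), the set
`B = {b_S : ∅ ≠ S ⊆ A}` and the set `C = {c_S : ∅ ≠ S ⊆ A}`. -/
abbrev GkVert (k : ℕ) :=
  Fin k ⊕ ({S : Finset (Fin k) // S.Nonempty} ⊕ {S : Finset (Fin k) // S.Nonempty})

/-- The relation generating the edges of `G_k`: each of `A`, `B`, `C` is a clique,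
`b_S` is adjacent to exactly the vertices of `A` in `S`, and `b_S` is adjacent to `c_S`. -/
def GkRel (k : ℕ) : GkVert k → GkVert k → Prop
  | Sum.inl _, Sum.inl _ => True
  | Sum.inl a, Sum.inr (Sum.inl S) => a ∈ S.val
  | Sum.inr (Sum.inl _), Sum.inr (Sum.inl _) => True
  | Sum.inr (Sum.inl S), Sum.inr (Sum.inr T) => S = T
  | Sum.inr (Sum.inr _), Sum.inr (Sum.inr _) => True
  | _, _ => False

/-- The graph `G_k` from Definition 3.5. -/
def Gk (k : ℕ) : SimpleGraph (GkVert k) := SimpleGraph.fromRel (GkRel k)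

section Helpers

variable {k : ℕ}

lemma adj_ab {a : Fin k} {S : {S : Finset (Fin k) // S.Nonempty}} :
    (Gk k).Adj (Sum.inl a) (Sum.inr (Sum.inl S)) ↔ a ∈ S.val := by
  simp [Gk, SimpleGraph.fromRel_adj, GkRel]

lemma adj_ac {a : Fin k} {S : {S : Finset (Fin k) // S.Nonempty}} :
    ¬ (Gk k).Adj (Sum.inl a) (Sum.inr (Sum.inr S)) := by
  simp [Gk, SimpleGraph.fromRel_adj, GkRel]

lemma adj_bb {S T : {S : Finset (Fin k) // S.Nonempty}} :
    (Gk k).Adj (Sum.inr (Sum.inl S)) (Sum.inr (Sum.inl T)) ↔ S ≠ T := by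
  simp [Gk, SimpleGraph.fromRel_adj, GkRel]

lemma adj_bc {S T : {S : Finset (Fin k) // S.Nonempty}} :
    (Gk k).Adj (Sum.inr (Sum.inl S)) (Sum.inr (Sum.inr T)) ↔ S = T := by
  constructor
  · rintro ⟨-, h | h⟩
    · exact h
    · exact absurd h (by simp [GkRel])
  · rintro rfl
    exact ⟨by simp, Or.inl rfl⟩

lemma adj_cc {S T : {S : Finset (Fin k) // S.Nonempty}} :
    (Gk k).Adj (Sum.inr (Sum.inr S)) (Sum.inr (Sum.inr T)) ↔ S ≠ T := by
  simp [Gk, SimpleGraph.fromRel_adj, GkRel]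

lemma dist_eq_two' {V : Type*} {G : SimpleGraph V} {u v w : V} (hne : u ≠ v)
    (huv : ¬ G.Adj u v) (h1 : G.Adj u w) (h2 : G.Adj w v) : G.dist u v = 2 := by
  have hle : G.dist u v ≤ 2 := by
    have := SimpleGraph.dist_le (SimpleGraph.Walk.cons h1 (SimpleGraph.Walk.cons h2 SimpleGraph.Walk.nil))
    simpa using this
  have h0 : G.dist u v ≠ 0 := by
    rw [SimpleGraph.dist_ne_zero_iff_ne_and_reachable]
    exact ⟨hne, ⟨SimpleGraph.Walk.cons h1 (SimpleGraph.Walk.cons h2 SimpleGraph.Walk.nil)⟩⟩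
  have h1' : G.dist u v ≠ 1 := fun h => huv (SimpleGraph.dist_eq_one_iff_adj.mp h)
  omega

lemma dist_ne_two' {V : Type*} {G : SimpleGraph V} {u v : V}
    (h : ∀ w, ¬(G.Adj u w ∧ G.Adj w v)) : G.dist u v ≠ 2 := by
  intro hd
  have h0 : G.dist u v ≠ 0 := by rw [hd]; omega
  obtain ⟨p, hp⟩ := SimpleGraph.exists_walk_of_dist_ne_zero h0
  rw [hd] at hp
  match p, hp with
  | SimpleGraph.Walk.cons h1 (SimpleGraph.Walk.cons h2 SimpleGraph.Walk.nil), _ =>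
    exact h _ ⟨h1, h2⟩

lemma gk_preconnected (k : ℕ) (hk : 1 ≤ k) : (Gk k).Preconnected := by
  haveI : Nonempty (Fin k) := ⟨⟨0, by omega⟩⟩
  set U : {S : Finset (Fin k) // S.Nonempty} := ⟨Finset.univ, Finset.univ_nonempty⟩ with hU
  have reach : ∀ v : GkVert k, (Gk k).Reachable v (Sum.inr (Sum.inl U)) := by
    rintro (a | S | S)
    · exact (adj_ab.mpr (by simp [hU])).reachable
    · rcases eq_or_ne S U with rfl | h
      · exact SimpleGraph.Reachable.refl _
      · exact (adj_bb.mpr h).reachable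
    · rcases eq_or_ne S U with rfl | h
      · exact ((adj_bc.mpr rfl).symm).reachable
      · exact (((adj_bc.mpr rfl).symm).reachable).trans ((adj_bb.mpr h).reachable)
  intro u v
  exact (reach u).trans (reach v).symm

lemma exists_third {α : Type*} {s0 s1 s2 S T : α}
    (h01 : s0 ≠ s1) (h02 : s0 ≠ s2) (h12 : s1 ≠ s2) :
    ∃ U, U ≠ S ∧ U ≠ T := by
  rcases eq_or_ne s0 S with rfl | h0S
  · rcases eq_or_ne s1 T with rfl | h1T
    · exact ⟨s2, h02.symm, h12.symm⟩
    · exact ⟨s1, h01.symm, h1T⟩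
  · rcases eq_or_ne s0 T with rfl | h0T
    · rcases eq_or_ne s1 S with rfl | h1S
      · exact ⟨s2, h12.symm, h02.symm⟩
      · exact ⟨s1, h1S, h01.symm⟩
    · exact ⟨s0, h0S, h0T⟩

end Helpers

theorem pairing_resolving_Gk (k : ℕ) (hk : 3 ≤ k)
    (x : {S : Finset (Fin k) // S.Nonempty} → GkVert k)
    (hx : ∀ S, x S = Sum.inr (Sum.inl S) ∨ x S = Sum.inr (Sum.inr S)) :
    IsResolving (Gk k) (Set.range x) := by
  classical
  have hpre : (Gk k).Preconnected := gk_preconnected k (by omega)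
  have hpos : ∀ {u v : GkVert k}, u ≠ v → (Gk k).dist u v ≠ 0 := fun h =>
    SimpleGraph.dist_ne_zero_iff_ne_and_reachable.mpr ⟨h, hpre _ _⟩
  have hd1 : ∀ {u v : GkVert k}, (Gk k).Adj u v → (Gk k).dist u v = 1 :=
    fun h => SimpleGraph.dist_eq_one_iff_adj.mpr h
  have hnd1 : ∀ {u v : GkVert k}, ¬(Gk k).Adj u v → (Gk k).dist u v ≠ 1 :=
    fun h h1 => h (SimpleGraph.dist_eq_one_iff_adj.mp h1)
  haveI : Nontrivial (Fin k) :=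
    ⟨⟨⟨0, by omega⟩, ⟨1, by omega⟩, by simp [Fin.ext_iff]⟩⟩
  -- case A vs A
  have caseAA : ∀ a a' : Fin k, a ≠ a' →
      ∃ z ∈ Set.range x, (Gk k).dist (Sum.inl a) z ≠ (Gk k).dist (Sum.inl a') z := by
    intro a a' h
    set S : {S : Finset (Fin k) // S.Nonempty} := ⟨{a}, Finset.singleton_nonempty a⟩ with hS
    refine ⟨x S, ⟨S, rfl⟩, ?_⟩
    rcases hx S with hxS | hxS <;> rw [hxS]
    · rw [hd1 (adj_ab.mpr (by simp [hS]))]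
      exact (hnd1 (fun had => h.symm (by simpa [hS] using adj_ab.mp had))).symm
    · rw [dist_eq_two' (by simp) adj_ac (adj_ab.mpr (by simp [hS])) (adj_bc.mpr rfl)]
      refine (dist_ne_two' ?_).symm
      rintro (b | U | U) ⟨h1, h2⟩
      · exact adj_ac h2
      · have hU : U = S := adj_bc.mp h2
        rw [hU] at h1
        exact h.symm (by simpa [hS] using adj_ab.mp h1)
      · exact adj_ac h1
  -- case A vs B
  have caseAB : ∀ (a : Fin k) (T : {S : Finset (Fin k) // S.Nonempty}),
      ∃ z ∈ Set.range x, (Gk k).dist (Sum.inl a) z ≠ (Gk k).dist (Sum.inr (Sum.inl T)) z := by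
    intro a T
    by_cases haT : a ∈ T.val
    · obtain ⟨a', ha'⟩ := exists_ne a
      set S : {S : Finset (Fin k) // S.Nonempty} := ⟨{a'}, Finset.singleton_nonempty a'⟩ with hS
      have hST : S ≠ T := by
        intro h; rw [← h] at haT
        have haa : a = a' := by simpa [hS] using haT
        exact ha' haa.symm
      refine ⟨x S, ⟨S, rfl⟩, ?_⟩
      rcases hx S with hxS | hxS <;> rw [hxS]
      · rw [show (Gk k).dist (Sum.inr (Sum.inl T)) (Sum.inr (Sum.inl S)) = 1 from
          hd1 (adj_bb.mpr hST.symm)]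
        exact hnd1 (fun had => ha' (show a = a' by simpa [hS] using adj_ab.mp had).symm)
      · rw [show (Gk k).dist (Sum.inr (Sum.inl T)) (Sum.inr (Sum.inr S)) = 2 from
          dist_eq_two' (by simp) (fun h => hST ((adj_bc.mp h).symm))
            (adj_bb.mpr hST.symm) (adj_bc.mpr rfl)]
        refine dist_ne_two' ?_
        rintro (b | U | U) ⟨h1, h2⟩
        · exact adj_ac h2
        · have hU : U = S := adj_bc.mp h2
          rw [hU] at h1
          exact ha' (show a = a' by simpa [hS] using adj_ab.mp h1).symm
        · exact adj_ac h1
    · refine ⟨x T, ⟨T, rfl⟩, ?_⟩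
      rcases hx T with hxT | hxT <;> rw [hxT]
      · rw [SimpleGraph.dist_self]
        exact hpos (by simp)
      · rw [hd1 (adj_bc.mpr rfl)]
        exact hnd1 adj_ac
  -- case A vs C
  have caseAC : ∀ (a : Fin k) (T : {S : Finset (Fin k) // S.Nonempty}),
      ∃ z ∈ Set.range x, (Gk k).dist (Sum.inl a) z ≠ (Gk k).dist (Sum.inr (Sum.inr T)) z := by
    intro a T
    rcases hx T with hxT | hxT
    · by_cases haT : a ∈ T.val
      · obtain ⟨a', ha'⟩ := exists_ne a
        set S : {S : Finset (Fin k) // S.Nonempty} :=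
          if h : T.val = {a} then ⟨{a, a'}, Finset.insert_nonempty a {a'}⟩
          else ⟨{a}, Finset.singleton_nonempty a⟩ with hS
        have haS : a ∈ S.val := by
          by_cases h : T.val = {a} <;> simp [hS, h]
        have hST : S ≠ T := by
          intro hEq
          by_cases h : T.val = {a}
          · have : a' ∈ T.val := by rw [← hEq]; simp [hS, h]
            rw [h] at this
            exact ha' (by simpa using this)
          · apply h
            rw [← hEq]; simp [hS, h]
        refine ⟨x S, ⟨S, rfl⟩, ?_⟩
        rcases hx S with hxS | hxS <;> rw [hxS]
        · rw [hd1 (adj_ab.mpr haS)]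
          exact (hnd1 (fun had => hST (adj_bc.mp had.symm))).symm
        · rw [dist_eq_two' (by simp) adj_ac (adj_ab.mpr haS) (adj_bc.mpr rfl),
            show (Gk k).dist (Sum.inr (Sum.inr T)) (Sum.inr (Sum.inr S)) = 1 from
              hd1 (adj_cc.mpr hST.symm)]
          omega
      · refine ⟨x T, ⟨T, rfl⟩, ?_⟩
        rw [hxT]
        rw [show (Gk k).dist (Sum.inr (Sum.inr T)) (Sum.inr (Sum.inl T)) = 1 from
          hd1 (adj_bc.mpr rfl).symm]
        exact hnd1 (fun had => haT (adj_ab.mp had))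
    · refine ⟨x T, ⟨T, rfl⟩, ?_⟩
      rw [hxT, SimpleGraph.dist_self]
      exact hpos (by simp)
  -- case B vs B
  have caseBB : ∀ S T : {S : Finset (Fin k) // S.Nonempty}, S ≠ T →
      ∃ z ∈ Set.range x, (Gk k).dist (Sum.inr (Sum.inl S)) z ≠
        (Gk k).dist (Sum.inr (Sum.inl T)) z := by
    intro S T h
    refine ⟨x S, ⟨S, rfl⟩, ?_⟩
    rcases hx S with hxS | hxS <;> rw [hxS]
    · rw [SimpleGraph.dist_self]
      exact (hpos (by simp [h.symm])).symm
    · rw [hd1 (adj_bc.mpr rfl)]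
      exact (hnd1 (fun had => h.symm (adj_bc.mp had))).symm
  -- case C vs C
  have caseCC : ∀ S T : {S : Finset (Fin k) // S.Nonempty}, S ≠ T →
      ∃ z ∈ Set.range x, (Gk k).dist (Sum.inr (Sum.inr S)) z ≠
        (Gk k).dist (Sum.inr (Sum.inr T)) z := by
    intro S T h
    refine ⟨x S, ⟨S, rfl⟩, ?_⟩
    rcases hx S with hxS | hxS <;> rw [hxS]
    · rw [hd1 (adj_bc.mpr rfl).symm]
      exact (hnd1 (fun had => h (adj_bc.mp had.symm))).symm
    · rw [SimpleGraph.dist_self]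
      exact (hpos (by simp [h.symm])).symm
  -- case B vs C
  have caseBC : ∀ S T : {S : Finset (Fin k) // S.Nonempty},
      ∃ z ∈ Set.range x, (Gk k).dist (Sum.inr (Sum.inl S)) z ≠
        (Gk k).dist (Sum.inr (Sum.inr T)) z := by
    intro S T
    rcases eq_or_ne S T with rfl | h
    · refine ⟨x S, ⟨S, rfl⟩, ?_⟩
      rcases hx S with hxS | hxS <;> rw [hxS]
      · rw [SimpleGraph.dist_self]
        exact (hpos (by simp)).symm
      · rw [SimpleGraph.dist_self]
        exact hpos (by simp)
    · -- pick a third nonempty subset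
      have h01 : (⟨{(⟨0, by omega⟩ : Fin k)}, Finset.singleton_nonempty _⟩ :
          {S : Finset (Fin k) // S.Nonempty}) ≠ ⟨{⟨1, by omega⟩}, Finset.singleton_nonempty _⟩ := by
        simp [Subtype.ext_iff, Finset.singleton_inj, Fin.ext_iff]
      have h02 : (⟨{(⟨0, by omega⟩ : Fin k)}, Finset.singleton_nonempty _⟩ :
          {S : Finset (Fin k) // S.Nonempty}) ≠ ⟨{⟨2, by omega⟩}, Finset.singleton_nonempty _⟩ := by
        simp [Subtype.ext_iff, Finset.singleton_inj, Fin.ext_iff]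
      have h12 : (⟨{(⟨1, by omega⟩ : Fin k)}, Finset.singleton_nonempty _⟩ :
          {S : Finset (Fin k) // S.Nonempty}) ≠ ⟨{⟨2, by omega⟩}, Finset.singleton_nonempty _⟩ := by
        simp [Subtype.ext_iff, Finset.singleton_inj, Fin.ext_iff]
      obtain ⟨U, hUS, hUT⟩ := exists_third (S := S) (T := T) h01 h02 h12
      refine ⟨x U, ⟨U, rfl⟩, ?_⟩
      rcases hx U with hxU | hxU <;> rw [hxU]
      · rw [hd1 (adj_bb.mpr (fun hh => hUS hh.symm))]
        exact (hnd1 (fun had => hUT (adj_bc.mp had.symm))).symm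
      · rw [show (Gk k).dist (Sum.inr (Sum.inr T)) (Sum.inr (Sum.inr U)) = 1 from
          hd1 (adj_cc.mpr (fun hh => hUT hh.symm))]
        exact hnd1 (fun had => hUS (adj_bc.mp had).symm)
  intro u v huv
  match u, v with
  | Sum.inl a, Sum.inl a' => exact caseAA a a' (fun h => huv (congrArg _ h))
  | Sum.inl a, Sum.inr (Sum.inl T) => exact caseAB a T
  | Sum.inr (Sum.inl T), Sum.inl a =>
      obtain ⟨z, hz, h⟩ := caseAB a T; exact ⟨z, hz, h.symm⟩
  | Sum.inl a, Sum.inr (Sum.inr T) => exact caseAC a T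
  | Sum.inr (Sum.inr T), Sum.inl a =>
      obtain ⟨z, hz, h⟩ := caseAC a T; exact ⟨z, hz, h.symm⟩
  | Sum.inr (Sum.inl S), Sum.inr (Sum.inl T) =>
      exact caseBB S T (fun h => huv (by rw [h]))
  | Sum.inr (Sum.inr S), Sum.inr (Sum.inr T) =>
      exact caseCC S T (fun h => huv (by rw [h]))
  | Sum.inr (Sum.inl S), Sum.inr (Sum.inr T) => exact caseBC S T
  | Sum.inr (Sum.inr T), Sum.inr (Sum.inl S) =>
      obtain ⟨z, hz, h⟩ := caseBC S T; exact ⟨z, hz, h.symm⟩
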